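/- arXiv:math/0603033 — 2 statements merged into one kernel-verified Lean document; each statement's English description precedes it below -/
import Mathlib

section
/- For any 2n × 2n matrix (a_{i,j}) with entries in a commutative ring, det(a_{i,j})_{1≤i,j≤2n} = ∑_{σ ∈ E_{2n}} sgn(σ) ∏_{j=1}^n (a_{σ(2j−1),2j−1}·a_{σ(2j),2j} − a_{σ(2j−1),2j}·a_{σ(2j),2j−1}), where E_{2n} = {σ ∈ S_{2n} : σ(2i−1) < σ(2i) for 1 ≤ i ≤ n}. -/
open Finset

noncomputable section

/-- sign of a permutation, cast into a commutative ring -/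
def psgn {R : Type*} [CommRing R] {α : Type*} [DecidableEq α] [Fintype α]
    (σ : Equiv.Perm α) : R := ((Equiv.Perm.sign σ : ℤ) : R)

/-- Cayley's hyperdeterminant `Det^[2m]` of a `2m`-dimensional array of side `n`. -/
def hdet {R : Type*} [CommRing R] [Algebra ℂ R] (m n : ℕ)
    (A : (Fin (2*m) → Fin n) → R) : R :=
  ((n.factorial : ℂ)⁻¹) • ∑ σ : Fin (2*m) → Equiv.Perm (Fin n),
    (∏ t, psgn (σ t)) * ∏ i, A (fun t => σ t i)

/-- position `2i-1` (1-based), i.e. `2i` (0-based) -/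
def lo {n : ℕ} (i : Fin n) : Fin (2*n) := ⟨2*i.1, by have := i.2; omega⟩
/-- position `2i` (1-based), i.e. `2i+1` (0-based) -/
def hi {n : ℕ} (i : Fin n) : Fin (2*n) := ⟨2*i.1+1, by have := i.2; omega⟩

/-- the set `E_{2n}` of permutations with `σ(2i-1) < σ(2i)` -/
def Eset (n : ℕ) : Finset (Equiv.Perm (Fin (2*n))) :=
  Finset.univ.filter (fun σ => ∀ i : Fin n, σ (lo i) < σ (hi i))

/-- the hyperpfaffian `Pf^[2m]` of a `2m`-dimensional array of side `2n`. -/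
def hpf {R : Type*} [CommRing R] [Algebra ℂ R] (m n : ℕ)
    (B : (Fin (2*m) → Fin (2*n)) → R) : R :=
  ((n.factorial : ℂ)⁻¹) • ∑ σ ∈ Fintype.piFinset (fun _ : Fin m => Eset n),
    (∏ s, psgn (σ s)) *
      ∏ i : Fin n, B (fun t => σ ⟨t.1/2, by have := t.2; omega⟩
        (if t.1 % 2 = 0 then lo i else hi i))

/-- the pfaffian of a `2n × 2n` matrix (agreeing with the usual pfaffian on
alternating matrices) -/
def pfn {R : Type*} [CommRing R] [Algebra ℂ R] (n : ℕ)
    (M : Matrix (Fin (2*n)) (Fin (2*n)) R) : R :=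
  ((n.factorial : ℂ)⁻¹) • ∑ σ ∈ Eset n, psgn σ * ∏ i : Fin n, M (σ (lo i)) (σ (hi i))

lemma lo_ne_hi {n : ℕ} (i : Fin n) : lo i ≠ hi i := by
  simp [lo, hi, Fin.ext_iff]


lemma swap_pair_commute {n : ℕ} {i j : Fin n} (h : i ≠ j) :
    Commute (Equiv.swap (lo i) (hi i)) (Equiv.swap (lo j) (hi j)) := by
  have h' : i.1 ≠ j.1 := Fin.val_ne_of_ne h
  ext x
  simp only [Equiv.Perm.mul_apply, Equiv.swap_apply_def]
  split_ifs <;> first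
    | rfl
    | (simp only [lo, hi, Fin.ext_iff, Fin.mk.injEq] at *; omega)

lemma eps_comm {n : ℕ} (t : Finset (Fin n)) :
    (t : Set (Fin n)).Pairwise (Function.onFun Commute fun i => Equiv.swap (lo i) (hi i)) :=
  fun _ _ _ _ h => swap_pair_commute h

def eps {n : ℕ} (t : Finset (Fin n)) : Equiv.Perm (Fin (2*n)) :=
  t.noncommProd (fun i => Equiv.swap (lo i) (hi i))
    (eps_comm t)

lemma eps_apply_lo {n : ℕ} (t : Finset (Fin n)) (i : Fin n) :
    eps t (lo i) = if i ∈ t then hi i else lo i := by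
  classical
  induction t using Finset.induction_on with
  | empty => simp [eps]
  | @insert a s ha ih =>
    rw [eps, Finset.noncommProd_insert_of_notMem _ _ _ _ ha]
    rw [Equiv.Perm.mul_apply, ← eps, ih]
    by_cases hia : i = a
    · subst hia; simp [ha]
    · have hv : i.1 ≠ a.1 := Fin.val_ne_of_ne hia
      have h1 : (lo i : Fin (2*n)) ≠ lo a := by simp [lo, Fin.ext_iff]; omega
      have h2 : (lo i : Fin (2*n)) ≠ hi a := by simp [lo, hi, Fin.ext_iff]; omega
      have h3 : (hi i : Fin (2*n)) ≠ lo a := by simp [lo, hi, Fin.ext_iff]; omega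
      have h4 : (hi i : Fin (2*n)) ≠ hi a := by simp [hi, Fin.ext_iff]; omega
      by_cases hs : i ∈ s
      · rw [if_pos hs, if_pos (Finset.mem_insert_of_mem hs),
          Equiv.swap_apply_of_ne_of_ne h3 h4]
      · rw [if_neg hs, if_neg (by simp [hia, hs]),
          Equiv.swap_apply_of_ne_of_ne h1 h2]

lemma eps_apply_hi {n : ℕ} (t : Finset (Fin n)) (i : Fin n) :
    eps t (hi i) = if i ∈ t then lo i else hi i := by
  classical
  induction t using Finset.induction_on with
  | empty => simp [eps]
  | @insert a s ha ih =>
    rw [eps, Finset.noncommProd_insert_of_notMem _ _ _ _ ha]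
    rw [Equiv.Perm.mul_apply, ← eps, ih]
    by_cases hia : i = a
    · subst hia; simp [ha]
    · have hv : i.1 ≠ a.1 := Fin.val_ne_of_ne hia
      have h1 : (lo i : Fin (2*n)) ≠ lo a := by simp [lo, Fin.ext_iff]; omega
      have h2 : (lo i : Fin (2*n)) ≠ hi a := by simp [lo, hi, Fin.ext_iff]; omega
      have h3 : (hi i : Fin (2*n)) ≠ lo a := by simp [lo, hi, Fin.ext_iff]; omega
      have h4 : (hi i : Fin (2*n)) ≠ hi a := by simp [hi, Fin.ext_iff]; omega
      by_cases hs : i ∈ s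
      · rw [if_pos hs, if_pos (Finset.mem_insert_of_mem hs),
          Equiv.swap_apply_of_ne_of_ne h1 h2]
      · rw [if_neg hs, if_neg (by simp [hia, hs]),
          Equiv.swap_apply_of_ne_of_ne h3 h4]

lemma eps_invol {n : ℕ} (t : Finset (Fin n)) (x : Fin (2*n)) :
    eps t (eps t x) = x := by
  have hx : x = lo ⟨x.1/2, by have := x.2; omega⟩ ∨
      x = hi ⟨x.1/2, by have := x.2; omega⟩ := by
    rcases Nat.even_or_odd x.1 with h | h
    · obtain ⟨k, hk⟩ := h; left; simp [lo, Fin.ext_iff]; omega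
    · obtain ⟨k, hk⟩ := h; right; simp [hi, Fin.ext_iff]; omega
  rcases hx with h | h
  · rw [h, eps_apply_lo]
    split_ifs with ht
    · rw [eps_apply_hi, if_pos ht]
    · rw [eps_apply_lo, if_neg ht]
  · rw [h, eps_apply_hi]
    split_ifs with ht
    · rw [eps_apply_lo, if_pos ht]
    · rw [eps_apply_hi, if_neg ht]

lemma eps_mul_eps {n : ℕ} (t : Finset (Fin n)) : eps t * eps t = 1 := by
  ext x
  simp [Equiv.Perm.mul_apply, eps_invol]

lemma sign_eps {n : ℕ} (t : Finset (Fin n)) :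
    Equiv.Perm.sign (eps t) = (-1) ^ t.card := by
  rw [eps, Finset.map_noncommProd _ _ _ (Equiv.Perm.sign)]
  rw [Finset.noncommProd_eq_prod]
  rw [Finset.prod_congr rfl (fun i _ => Equiv.Perm.sign_swap (by
    simp [lo, hi, Fin.ext_iff]))]
  simp

def pairEquiv (n : ℕ) : Fin n × Bool ≃ Fin (2*n) where
  toFun p := if p.2 then hi p.1 else lo p.1
  invFun x := (⟨x.1/2, by have := x.2; omega⟩, decide (x.1 % 2 = 1))
  left_inv p := by
    obtain ⟨j, b⟩ := p
    cases b <;> simp [lo, hi, Prod.ext_iff, Fin.ext_iff] <;> omega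
  right_inv x := by
    rcases Nat.even_or_odd x.1 with h | h
    · obtain ⟨k, hk⟩ := h
      have h2 : ¬ (x.1 % 2 = 1) := by omega
      simp [h2, lo, Fin.ext_iff]; omega
    · obtain ⟨k, hk⟩ := h
      have h2 : x.1 % 2 = 1 := by omega
      simp [h2, hi, Fin.ext_iff]; omega

lemma prod_split {M : Type*} [CommMonoid M] {n : ℕ} (g : Fin (2*n) → M) :
    ∏ x, g x = ∏ j : Fin n, (g (lo j) * g (hi j)) := by
  rw [← (pairEquiv n).prod_comp g, Fintype.prod_prod_type]
  simp [pairEquiv, mul_comm]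


/-- Expansion of a determinant of even size into 2×2 minors along consecutive
column pairs, summed over `E_{2n}`. -/
theorem det_expansion_two_by_two_minors {R : Type*} [CommRing R] (n : ℕ)
    (a : Matrix (Fin (2*n)) (Fin (2*n)) R) :
    Matrix.det a
      = ∑ σ ∈ Eset n, psgn σ *
          ∏ j : Fin n,
            (a (σ (lo j)) (lo j) * a (σ (hi j)) (hi j)
              - a (σ (lo j)) (hi j) * a (σ (hi j)) (lo j)) := by
  classical
  set X : Equiv.Perm (Fin (2*n)) → Fin n → R :=
    fun τ j => a (τ (lo j)) (lo j) * a (τ (hi j)) (hi j) with hX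
  set Y : Equiv.Perm (Fin (2*n)) → Fin n → R :=
    fun τ j => a (τ (lo j)) (hi j) * a (τ (hi j)) (lo j) with hY
  set T : Equiv.Perm (Fin (2*n)) → Finset (Fin n) :=
    fun σ => univ.filter (fun i => σ (hi i) < σ (lo i)) with hT
  have expand : ∀ τ, (∏ j : Fin n, (X τ j - Y τ j))
      = ∑ t ∈ (univ : Finset (Fin n)).powerset,
          (∏ j ∈ t, -(Y τ j)) * ∏ j ∈ univ \ t, X τ j := by
    intro τ
    rw [← Finset.prod_add (fun j => -(Y τ j)) (X τ) univ]
    congr 1; ext j; ring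
  have hEmem : ∀ τ : Equiv.Perm (Fin (2*n)),
      τ ∈ Eset n ↔ ∀ i : Fin n, τ (lo i) < τ (hi i) := by
    intro τ; simp [Eset]
  have key_mem : ∀ σ : Equiv.Perm (Fin (2*n)), σ * eps (T σ) ∈ Eset n := by
    intro σ
    rw [hEmem]
    intro i
    rw [Equiv.Perm.mul_apply, Equiv.Perm.mul_apply, eps_apply_lo, eps_apply_hi]
    by_cases h : i ∈ T σ
    · rw [if_pos h, if_pos h]
      exact (Finset.mem_filter.mp h).2
    · rw [if_neg h, if_neg h]
      have h1 : ¬ σ (hi i) < σ (lo i) := by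
        intro hc; exact h (Finset.mem_filter.mpr ⟨Finset.mem_univ _, hc⟩)
      exact lt_of_le_of_ne (not_lt.mp h1) (σ.injective.ne (lo_ne_hi i))
  have hTeq : ∀ τ ∈ Eset n, ∀ t : Finset (Fin n), T (τ * eps t) = t := by
    intro τ hτ t
    rw [hEmem] at hτ
    ext i
    simp only [hT, Finset.mem_filter, Finset.mem_univ, true_and,
      Equiv.Perm.mul_apply, eps_apply_lo, eps_apply_hi]
    by_cases h : i ∈ t
    · simp only [if_pos h]
      exact iff_of_true (hτ i) h
    · simp only [if_neg h]
      exact iff_of_false (hτ i).asymm h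
  have cancel : ∀ (σ : Equiv.Perm (Fin (2*n))) (t : Finset (Fin n)),
      (σ * eps t) * eps t = σ := by
    intro σ t
    rw [mul_assoc, eps_mul_eps, mul_one]
  change Matrix.det a = ∑ σ ∈ Eset n, psgn σ * ∏ j : Fin n, (X σ j - Y σ j)
  simp_rw [expand, Finset.mul_sum, Finset.sum_sigma']
  rw [Matrix.det_apply']
  refine Finset.sum_nbij' (fun σ => ⟨σ * eps (T σ), T σ⟩)
      (fun p => p.1 * eps p.2) ?_ (fun _ _ => Finset.mem_univ _) ?_ ?_ ?_
  · intro σ _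
    exact Finset.mem_sigma.mpr ⟨key_mem σ, Finset.mem_powerset.mpr (Finset.subset_univ _)⟩
  · intro σ _
    exact cancel σ (T σ)
  · intro p hp
    obtain ⟨τ, t⟩ := p
    have hτ : τ ∈ Eset n := (Finset.mem_sigma.mp hp).1
    have h1 : T (τ * eps t) = t := hTeq τ hτ t
    simp only [h1, cancel]
  · intro σ _
    set t := T σ with ht
    set τ := σ * eps t with hτdef
    have hσ : σ = τ * eps t := (cancel σ t).symm
    have hsgn : (((Equiv.Perm.sign σ : ℤ) : R)) = psgn τ * (-1) ^ t.card := by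
      conv_lhs => rw [hσ]
      rw [show (((Equiv.Perm.sign (τ * eps t) : ℤ) : R)) = psgn (τ * eps t) from rfl]
      simp [psgn, sign_eps]
    have hfac : ∀ j : Fin n, a (σ (lo j)) (lo j) * a (σ (hi j)) (hi j)
        = if j ∈ t then Y τ j else X τ j := by
      intro j
      by_cases h : j ∈ t
      · have h1 : σ (lo j) = τ (hi j) := by
          rw [hσ, Equiv.Perm.mul_apply, eps_apply_lo, if_pos h]
        have h2 : σ (hi j) = τ (lo j) := by
          rw [hσ, Equiv.Perm.mul_apply, eps_apply_hi, if_pos h]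
        rw [if_pos h, h1, h2, hY]; ring
      · have h1 : σ (lo j) = τ (lo j) := by
          rw [hσ, Equiv.Perm.mul_apply, eps_apply_lo, if_neg h]
        have h2 : σ (hi j) = τ (hi j) := by
          rw [hσ, Equiv.Perm.mul_apply, eps_apply_hi, if_neg h]
        rw [if_neg h, h1, h2, hX]
    have hprod : (∏ i, a (σ i) i)
        = (∏ j ∈ t, Y τ j) * ∏ j ∈ univ \ t, X τ j := by
      rw [prod_split (fun x => a (σ x) x)]
      rw [Finset.prod_congr rfl (fun j _ => hfac j)]
      rw [← Finset.prod_filter_mul_prod_filter_not univ (· ∈ t)]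
      congr 1
      · rw [show univ.filter (· ∈ t) = t by ext; simp]
        exact Finset.prod_congr rfl (fun j hj => if_pos hj)
      · rw [show univ.filter (fun j => ¬ j ∈ t) = univ \ t by ext; simp]
        exact Finset.prod_congr rfl (fun j hj => if_neg (Finset.mem_sdiff.mp hj).2)
    have hneg : (∏ j ∈ t, -(Y τ j)) = (-1) ^ t.card * ∏ j ∈ t, Y τ j := by
      calc (∏ j ∈ t, -(Y τ j)) = ∏ j ∈ t, (-1 : R) * Y τ j :=
            Finset.prod_congr rfl (fun j _ => by ring)
        _ = (∏ _j ∈ t, (-1 : R)) * ∏ j ∈ t, Y τ j := Finset.prod_mul_distrib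
        _ = (-1) ^ t.card * ∏ j ∈ t, Y τ j := by rw [Finset.prod_const]
    show (((Equiv.Perm.sign σ : ℤ) : R)) * ∏ i, a (σ i) i = _
    rw [hsgn, hprod, hneg]
    ring

end
end

section
/- Let m, n, N be positive integers and let x^{(i)} = (x^{(i)}_1,...,x^{(i)}_n) be sequences of commuting indeterminates (or complex numbers) for 1 ≤ i ≤ 2m. Then ∑_λ s_λ(x^{(1)})·s_λ(x^{(2)})···s_λ(x^{(2m)}) · ∏_{i=1}^{2m} V(x^{(i)}) = Det^{[2m]}((1 − (x^{(1)}_{i_1}···x^{(2m)}_{i_{2m}})^{n+N})/(1 − x^{(1)}_{i_1}···x^{(2m)}_{i_{2m}}))_{1≤i_1,...,i_{2m}≤n}, where the sum is over partitions λ of length at most n with λ_1 ≤ N. -/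
open Finset

noncomputable section

/-- the "bialternant" `a_μ(x) = det(x_i^{μ_j})` -/
def aalt {n : ℕ} (x : Fin n → ℂ) (μ : Fin n → ℕ) : ℂ :=
  Matrix.det (Matrix.of fun i j : Fin n => x i ^ μ j)

lemma aalt_eq_sum {n : ℕ} (x : Fin n → ℂ) (k : Fin n → ℕ) :
    aalt x k = ∑ σ : Equiv.Perm (Fin n), psgn σ * ∏ i, x (σ i) ^ k i := by
  simp [aalt, Matrix.det_apply, psgn, Units.smul_def, zsmul_eq_mul]

lemma aalt_comp_perm {n : ℕ} (x : Fin n → ℂ) (k : Fin n → ℕ) (τ : Equiv.Perm (Fin n)) :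
    aalt x (k ∘ τ) = psgn τ * aalt x k := by
  have := Matrix.det_permute' τ (Matrix.of fun i j : Fin n => x i ^ k j)
  simpa [aalt, psgn, Matrix.submatrix] using this

lemma aalt_eq_zero {n : ℕ} (x : Fin n → ℂ) (k : Fin n → ℕ) {j j' : Fin n}
    (hne : j ≠ j') (h : k j = k j') : aalt x k = 0 := by
  apply Matrix.det_zero_of_column_eq hne
  intro i; simp [h]

lemma step1 (m n N : ℕ) (x : Fin (2*m) → Fin n → ℂ) :
    ∑ σ : Fin (2*m) → Equiv.Perm (Fin n),
      (∏ t, psgn (σ t) : ℂ) * ∏ i : Fin n, ∑ k ∈ Finset.range (n+N), ∏ t, (x t (σ t i))^k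
    = ∑ g ∈ Fintype.piFinset (fun _ : Fin n => Finset.range (n+N)), ∏ t, aalt (x t) g := by
  have h1 : ∀ σ : Fin (2*m) → Equiv.Perm (Fin n),
      (∏ i : Fin n, ∑ k ∈ Finset.range (n+N), ∏ t, (x t (σ t i))^k)
      = ∑ g ∈ Fintype.piFinset (fun _ : Fin n => Finset.range (n+N)),
          ∏ i, ∏ t, (x t (σ t i))^(g i) := fun σ => Finset.prod_univ_sum _ _
  simp_rw [h1, Finset.mul_sum]
  rw [Finset.sum_comm]
  refine Finset.sum_congr rfl fun g _ => ?_
  have h2 : ∀ σ : Fin (2*m) → Equiv.Perm (Fin n),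
      (∏ t, psgn (σ t) : ℂ) * ∏ i : Fin n, ∏ t, (x t (σ t i))^(g i)
      = ∏ t, (psgn (σ t) * ∏ i : Fin n, (x t (σ t i))^(g i)) := by
    intro σ; rw [Finset.prod_mul_distrib, Finset.prod_comm]
  simp_rw [h2, aalt_eq_sum]
  rw [← Fintype.piFinset_univ]
  exact (Finset.prod_univ_sum (fun _ : Fin (2*m) => (Finset.univ : Finset (Equiv.Perm (Fin n)))) (fun t σ => psgn σ * ∏ i : Fin n, x t (σ i) ^ g i)).symm

lemma anti_gap {n : ℕ} {g : Fin n → ℕ} (h : ∀ a b : Fin n, a < b → g b < g a) :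
    ∀ (d : ℕ) (a b : Fin n), a.1 + d = b.1 → g b + d ≤ g a := by
  intro d
  induction d with
  | zero => intro a b hab; have : a = b := Fin.ext (by omega); subst this; omega
  | succ d ih =>
    intro a b hab
    have hb' : a.1 + d < n := by have := b.2; omega
    have h1 := ih a ⟨a.1 + d, hb'⟩ rfl
    have h2 := h ⟨a.1 + d, hb'⟩ b (by simp [Fin.lt_def]; omega)
    omega

def wOf {n : ℕ} (g : Fin n → ℕ) : Fin n → ℕ := fun b => g (Tuple.sort g (Fin.rev b))
def tOf {n : ℕ} (g : Fin n → ℕ) : Equiv.Perm (Fin n) := (Tuple.sort g)⁻¹.trans Fin.revPerm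

lemma wOf_comp {n : ℕ} (g : Fin n → ℕ) (i : Fin n) : wOf g (tOf g i) = g i := by
  simp [wOf, tOf, Fin.rev_rev]

lemma wOf_strictAnti {n : ℕ} {g : Fin n → ℕ} (hg : Function.Injective g) :
    ∀ a b : Fin n, a < b → wOf g b < wOf g a := by
  have hmono : Monotone (g ∘ Tuple.sort g) := Tuple.monotone_sort g
  have hinj : Function.Injective (g ∘ Tuple.sort g) := hg.comp (Equiv.injective _)
  have hsm : StrictMono (g ∘ Tuple.sort g) := hmono.strictMono_of_injective hinj
  intro a b hab
  exact hsm (by simpa [Fin.rev_lt_rev] using hab)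

lemma wOf_tOf_eq {n : ℕ} (w : Fin n → ℕ) (hw : ∀ a b : Fin n, a < b → w b < w a)
    (τ : Equiv.Perm (Fin n)) : wOf (w ∘ τ) = w ∧ tOf (w ∘ τ) = τ := by
  have hwanti : StrictAnti w := fun a b hab => hw a b hab
  have hwinj : Function.Injective w := hwanti.injective
  set g : Fin n → ℕ := w ∘ τ with hgdef
  have hginj : Function.Injective g := hwinj.comp (Equiv.injective _)
  set ρ : Equiv.Perm (Fin n) := (Fin.revPerm : Equiv.Perm (Fin n)).trans τ⁻¹ with hρ
  have hρ_app : ∀ j, g (ρ j) = w (Fin.rev j) := by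
    intro j; simp [hρ, hgdef]
  have hmono2 : Monotone (g ∘ ρ) := by
    intro a b hab
    simp only [Function.comp_apply, hρ_app]
    exact hwanti.antitone (Fin.rev_le_rev.mpr hab)
  have hmono1 : Monotone (g ∘ Tuple.sort g) := Tuple.monotone_sort g
  have heq : g ∘ ρ = g ∘ Tuple.sort g := Tuple.unique_monotone hmono2 hmono1
  have hρ_eq : ρ = Tuple.sort g := Equiv.ext fun j => hginj (congrFun heq j)
  refine ⟨?_, Equiv.ext fun i => ?_⟩
  · funext b
    simp [wOf, ← hρ_eq, hρ, hgdef, Fin.rev_rev]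
    rw [← hgdef, ← hρ_eq, hρ]; simp [Fin.rev_rev]
  · show ((Tuple.sort g)⁻¹.trans Fin.revPerm) i = τ i
    rw [← hρ_eq]
    simp [hρ, Equiv.Perm.inv_def, Equiv.symm_trans_apply, Fin.revPerm_symm, Fin.rev_rev]

lemma psgn_sq {α : Type*} [DecidableEq α] [Fintype α] (τ : Equiv.Perm α) :
    (psgn τ : ℂ) * psgn τ = 1 := by
  have h : (Equiv.Perm.sign τ : ℤ) * (Equiv.Perm.sign τ : ℤ) = 1 := by
    rcases Int.units_eq_one_or (Equiv.Perm.sign τ) with h | h <;> simp [h]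
  simp only [psgn, ← Int.cast_mul, h, Int.cast_one]

lemma psgn_pow_even {α : Type*} [DecidableEq α] [Fintype α] (τ : Equiv.Perm α) (m : ℕ) :
    (psgn τ : ℂ) ^ (2 * m) = 1 := by
  rw [pow_mul, sq, psgn_sq, one_pow]

lemma step2 (m n N : ℕ) (hm : 0 < m) (x : Fin (2*m) → Fin n → ℂ) :
    ∑ g ∈ Fintype.piFinset (fun _ : Fin n => Finset.range (n+N)), ∏ t, aalt (x t) g
    = (n.factorial : ℂ) * ∑ g ∈ (Fintype.piFinset (fun _ : Fin n => Finset.range (n+N))).filter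
        (fun g => ∀ a b : Fin n, a < b → g b < g a), ∏ t, aalt (x t) g := by
  classical
  set s := Fintype.piFinset (fun _ : Fin n => Finset.range (n+N)) with hs
  -- restrict to injective g
  have hrestrict : ∑ g ∈ s, ∏ t, aalt (x t) g
      = ∑ g ∈ s.filter (fun g => Function.Injective g), ∏ t, aalt (x t) g := by
    refine (Finset.sum_filter_of_ne ?_).symm
    intro g hg hne
    by_contra hninj
    rw [Function.not_injective_iff] at hninj
    obtain ⟨a, b, hab, hne'⟩ := hninj
    exact hne (Finset.prod_eq_zero (Finset.mem_univ ⟨0, by omega⟩)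
      (aalt_eq_zero _ _ hne' hab))
  rw [hrestrict]
  -- bijection with pairs (w, τ)
  have hbij : ∑ g ∈ s.filter (fun g => Function.Injective g), ∏ t, aalt (x t) g
      = ∑ p ∈ (s.filter (fun g => ∀ a b : Fin n, a < b → g b < g a)) ×ˢ
          (Finset.univ : Finset (Equiv.Perm (Fin n))), ∏ t, aalt (x t) p.1 := by
    refine Finset.sum_nbij' (fun g => (wOf g, tOf g)) (fun p => p.1 ∘ p.2) ?_ ?_ ?_ ?_ ?_
    · intro g hg
      rw [Finset.mem_filter] at hg
      obtain ⟨hg1, hg2⟩ := hg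
      rw [Finset.mem_product]
      refine ⟨Finset.mem_filter.mpr ⟨?_, wOf_strictAnti hg2⟩, Finset.mem_univ _⟩
      rw [hs, Fintype.mem_piFinset] at hg1 ⊢
      intro b; exact hg1 _
    · intro p hp
      rw [Finset.mem_product, Finset.mem_filter] at hp
      obtain ⟨⟨hp1, hp2⟩, _⟩ := hp
      rw [Finset.mem_filter]
      constructor
      · rw [hs, Fintype.mem_piFinset] at hp1 ⊢
        intro b; exact hp1 _
      · have : StrictAnti p.1 := fun a b hab => hp2 a b hab
        exact this.injective.comp (Equiv.injective _)
    · intro g hg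
      funext i
      exact wOf_comp g i
    · intro p hp
      rw [Finset.mem_product, Finset.mem_filter] at hp
      obtain ⟨⟨hp1, hp2⟩, _⟩ := hp
      obtain ⟨h1, h2⟩ := wOf_tOf_eq p.1 hp2 p.2
      exact Prod.ext h1 h2
    · intro g hg
      rw [Finset.mem_filter] at hg
      have hcomp : g = wOf g ∘ tOf g := funext fun i => (wOf_comp g i).symm
      calc ∏ t, aalt (x t) g = ∏ t, (psgn (tOf g) * aalt (x t) (wOf g)) := by
            refine Finset.prod_congr rfl fun t _ => ?_
            conv_lhs => rw [hcomp]
            exact aalt_comp_perm (x t) (wOf g) (tOf g)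
        _ = (psgn (tOf g)) ^ (2*m) * ∏ t, aalt (x t) (wOf g) := by
            rw [Finset.prod_mul_distrib, Finset.prod_const, Finset.card_univ, Fintype.card_fin]
        _ = ∏ t, aalt (x t) (wOf g) := by rw [psgn_pow_even, one_mul]
  rw [hbij, Finset.sum_product]
  simp only [Finset.sum_const, Finset.card_univ, Fintype.card_perm, Fintype.card_fin]
  rw [Finset.mul_sum]
  refine Finset.sum_congr rfl fun w _ => ?_
  rw [nsmul_eq_mul]

lemma step3 (m n N : ℕ) (hn : 0 < n) (x : Fin (2*m) → Fin n → ℂ) :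
    ∑ g ∈ (Fintype.piFinset (fun _ : Fin n => Finset.range (n+N))).filter
        (fun g => ∀ a b : Fin n, a < b → g b < g a), ∏ t, aalt (x t) g
    = ∑ lam ∈ (Finset.univ : Finset (Fin n → Fin (N+1))).filter
        (fun lam => ∀ j k : Fin n, j ≤ k → (lam k : ℕ) ≤ (lam j : ℕ)),
      ∏ i : Fin (2*m), aalt (x i) (fun b => (lam b : ℕ) + (n - 1 - b.1)) := by
  classical
  -- bounds for g in the filter
  have bounds : ∀ g : Fin n → ℕ, (∀ b, g b < n + N) → (∀ a b : Fin n, a < b → g b < g a) →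
      ∀ b : Fin n, n - 1 - b.1 ≤ g b ∧ g b + b.1 ≤ n + N - 1 := by
    intro g hr ha b
    constructor
    · have := anti_gap ha (n - 1 - b.1) b ⟨n-1, by omega⟩ (by simp; omega)
      omega
    · have := anti_gap ha b.1 ⟨0, hn⟩ b (by simp)
      have := hr ⟨0, hn⟩
      omega
  refine Finset.sum_nbij'
    (fun g => fun b : Fin n => (⟨min (g b - (n - 1 - b.1)) N, by omega⟩ : Fin (N+1)))
    (fun lam => fun b : Fin n => (lam b : ℕ) + (n - 1 - b.1)) ?_ ?_ ?_ ?_ ?_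
  · intro g hg
    rw [Finset.mem_filter] at hg
    obtain ⟨hg1, hg2⟩ := hg
    rw [Fintype.mem_piFinset] at hg1
    simp only [Finset.mem_range] at hg1
    have hb := bounds g hg1 hg2
    rw [Finset.mem_filter]
    refine ⟨Finset.mem_univ _, fun j k hjk => ?_⟩
    simp only
    rcases eq_or_lt_of_le hjk with h | h
    · subst h; omega
    · have h1 := anti_gap hg2 (k.1 - j.1) j k (by omega)
      have hbj := hb j
      have hbk := hb k
      have hj2 := j.2
      have hk2 := k.2
      rw [Fin.lt_def] at h
      omega
  · intro lam hlam
    rw [Finset.mem_filter] at hlam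
    rw [Finset.mem_filter, Fintype.mem_piFinset]
    constructor
    · intro b
      have := (lam b).isLt
      simp only [Finset.mem_range]
      omega
    · intro a b hab
      have h1 := hlam.2 a b (le_of_lt hab)
      rw [Fin.lt_def] at hab
      have hb2 := b.2
      show (lam b : ℕ) + (n - 1 - b.1) < (lam a : ℕ) + (n - 1 - a.1)
      omega
  · intro g hg
    rw [Finset.mem_filter] at hg
    obtain ⟨hg1, hg2⟩ := hg
    rw [Fintype.mem_piFinset] at hg1
    simp only [Finset.mem_range] at hg1
    have hb := bounds g hg1 hg2
    funext b
    have := hb b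
    have := b.2
    simp only
    omega
  · intro lam hlam
    funext b
    have := (lam b).isLt
    refine Fin.ext ?_
    simp only
    omega
  · intro g hg
    rw [Finset.mem_filter] at hg
    obtain ⟨hg1, hg2⟩ := hg
    rw [Fintype.mem_piFinset] at hg1
    simp only [Finset.mem_range] at hg1
    have hb := bounds g hg1 hg2
    refine Finset.prod_congr rfl fun t _ => ?_
    congr 1
    funext b
    have := hb b
    have := b.2
    simp only
    omega

/-- Finite summation formula for Schur polynomials:
`∑_{λ : ℓ(λ)≤n, λ₁≤N} s_λ(x⁽¹⁾)⋯s_λ(x⁽²ᵐ⁾) ⋅ ∏ V(x⁽ⁱ⁾)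
  = Det^[2m]( (1-(x⁽¹⁾_{i₁}⋯x⁽²ᵐ⁾_{i₂ₘ})^{n+N})/(1-x⁽¹⁾_{i₁}⋯x⁽²ᵐ⁾_{i₂ₘ}) )`,
where `s_λ(x)·V(x) = a_{λ+δ}(x)` and the entry is the geometric sum
`1 + t + ⋯ + t^{n+N-1}`. -/
theorem schur_sum_hyperdeterminant_finite (m n N : ℕ) (hm : 0 < m) (hn : 0 < n)
    (hN : 0 < N) (x : Fin (2*m) → Fin n → ℂ) :
    ∑ lam ∈ (Finset.univ : Finset (Fin n → Fin (N+1))).filter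
        (fun lam => ∀ j k : Fin n, j ≤ k → (lam k : ℕ) ≤ (lam j : ℕ)),
      ∏ i : Fin (2*m), aalt (x i) (fun b => (lam b : ℕ) + (n - 1 - b.1))
    = hdet m n (fun v => ∑ k ∈ Finset.range (n+N), ∏ t : Fin (2*m), (x t (v t)) ^ k) := by
  rw [hdet, step1 m n N x, step2 m n N hm x, smul_eq_mul, ← mul_assoc,
    inv_mul_cancel₀ (by exact_mod_cast Nat.factorial_ne_zero n), one_mul]
  exact (step3 m n N hn x).symm

end
end
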